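/- Let φ be a 3-SAT instance with variables X_1, …, X_n and clauses C_1, …, C_m, each clause containing exactly three pairwise different literals. Construct the network with nodes {s, t} ∪ {v_i : i ∈ [n]} ∪ {w_i^j, w̄_i^j : i ∈ [n], 0 ≤ j ≤ m} and arcs {(s, w_i^0), (s, w̄_i^0), (w_i^m, v_i), (w̄_i^m, v_i), (v_i, t) : i ∈ [n]} ∪ {(w_i^{j−1}, w_i^j), (w̄_i^{j−1}, w̄_i^j) : i ∈ [n], j ∈ [m]}; all capacities and transit times equal 1; the arc (w_i^{j−1}, w_i^j) has cost 1 if the literal ¬X_i occurs in C_j, the arc (w̄_i^{j−1}, w̄_i^j) has cost 1 if the literal X_i occurs in C_j, and all other arcs have cost 0; set the time horizon T = m + 4. Then there exists an integral temporally repeated flow with time horizon T of value at least n and peak cost at most 2 if and only if φ is satisfiable. Consequently, deciding whether a given instance admits an integral temporally repeated flow with peak cost at most a given bound is NP-hard, even on two-terminal series-parallel graphs with unit transit times, unit capacities, and arc costs in {0,1}. -/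

import Mathlib

open MeasureTheory

/-- A network over time: a digraph with arc capacities `u`, costs `c`,
transit times `τ`, a source `s` and a sink `t`. -/
structure Network (V : Type) (A : Type) where
  tail : A → V
  head : A → V
  u : A → ℕ
  c : A → ℕ
  τ : A → ℕ
  s : V
  t : V

namespace Network

variable {V A : Type}

/-- The node sequence visited by a list of arcs. -/
def nodes (N : Network V A) : List A → List V
  | [] => []
  | a :: rest => N.tail a :: ((a :: rest).map N.head)

/-- `p` is a simple `s`-`t` path (a non-empty list of consecutive arcs starting at
the source, ending at the sink and visiting pairwise distinct nodes). -/
def IsSTPath (N : Network V A) (p : List A) : Prop :=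
  p ≠ [] ∧ List.Chain' (fun a b => N.head a = N.tail b) p ∧
    (∀ a ∈ p.head?, N.tail a = N.s) ∧ (∀ a ∈ p.getLast?, N.head a = N.t) ∧
    (N.nodes p).Nodup

/-- `p` is a non-empty closed walk, i.e. a cycle. -/
def IsCycle (N : Network V A) (p : List A) : Prop :=
  p ≠ [] ∧ List.Chain' (fun a b => N.head a = N.tail b) p ∧
    ∀ a ∈ p.head?, ∀ b ∈ p.getLast?, N.head b = N.tail a

/-- The network contains no directed cycle. -/
def Acyclic (N : Network V A) : Prop := ∀ p : List A, ¬ N.IsCycle p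

/-- Transit time (length) of a path. -/
def pathTime (N : Network V A) (p : List A) : ℕ := (p.map N.τ).sum

/-- Bottleneck capacity of a path. -/
noncomputable def bottleneck (N : Network V A) (p : List A) : ℕ :=
  sInf (N.u '' {a | a ∈ p})

section
variable [DecidableEq A]

/-- Transit time of the part of `p` strictly before arc `a`. -/
def prefixTime (N : Network V A) (p : List A) (a : A) : ℕ :=
  ((p.takeWhile fun b => b ≠ a).map N.τ).sum

/-- Transit time of the part of `p` from arc `a` onwards. -/
def suffixTime (N : Network V A) (p : List A) (a : A) : ℕ :=
  ((p.dropWhile fun b => b ≠ a).map N.τ).sum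

/-- Inflow rate into arc `a` at time `θ` of the temporally repeated flow with
horizon `T` induced by the path decomposition `y`. -/
noncomputable def trRate (N : Network V A) (y : List A → ℝ) (T : ℝ) (a : A) (θ : ℝ) : ℝ :=
  ∑ᶠ p ∈ {p : List A | N.IsSTPath p ∧ (N.pathTime p : ℝ) ≤ T ∧ a ∈ p ∧
    (N.prefixTime p a : ℝ) ≤ θ ∧ (N.suffixTime p a : ℝ) < T - θ}, y p

/-- Static flow on arc `a` induced by the path decomposition `y`. -/
noncomputable def staticOf (N : Network V A) (y : List A → ℝ) (a : A) : ℝ :=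
  ∑ᶠ p ∈ {p : List A | a ∈ p}, y p

/-- `y` is a feasible (capacity-respecting) path decomposition of a static flow. -/
def IsDecomposition (N : Network V A) (y : List A → ℝ) : Prop :=
  (∀ p, 0 ≤ y p) ∧ (∀ p, y p ≠ 0 → N.IsSTPath p) ∧
    (Function.support y).Finite ∧ ∀ a : A, N.staticOf y a ≤ N.u a

/-- Value of the temporally repeated flow induced by `y` with horizon `T`. -/
noncomputable def trValue (N : Network V A) (y : List A → ℝ) (T : ℝ) : ℝ :=
  ∑ᶠ p ∈ {p : List A | N.IsSTPath p ∧ (N.pathTime p : ℝ) ≤ T}, y p * (T - N.pathTime p)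

/-- Amount of flow of the TR flow induced by `y` that has reached the sink by time `θ`. -/
noncomputable def arrTR (N : Network V A) (y : List A → ℝ) (θ : ℝ) : ℝ :=
  ∑ᶠ p ∈ {p : List A | N.IsSTPath p ∧ (N.pathTime p : ℝ) ≤ θ}, y p * (θ - N.pathTime p)

end

/-- All flow rates of the decomposition are (nonnegative) integers. -/
def IsIntegral (y : List A → ℝ) : Prop := ∀ p, ∃ n : ℕ, y p = n

section
variable [Fintype A]

/-- Cost of a flow over time `f` at time point `θ`. -/
noncomputable def costAt (N : Network V A) (f : A → ℝ → ℝ) (θ : ℝ) : ℝ :=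
  ∑ a : A, (N.c a : ℝ) * ∫ ξ in (θ - (N.τ a : ℝ))..θ, f a ξ

/-- Peak cost of a flow over time `f` with horizon `T`. -/
noncomputable def peakCost (N : Network V A) (f : A → ℝ → ℝ) (T : ℝ) : ℝ :=
  sSup (N.costAt f '' Set.Ico 0 T)

/-- Peak cost of the TR flow induced by the decomposition `y`. -/
noncomputable def trPeakCost [DecidableEq A] (N : Network V A) (y : List A → ℝ) (T : ℝ) : ℝ :=
  N.peakCost (N.trRate y T) T

variable [DecidableEq V]

/-- Cumulative flow having entered node `v` by time `θ`. -/
noncomputable def inflowBy (N : Network V A) (f : A → ℝ → ℝ) (v : V) (θ : ℝ) : ℝ :=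
  ∑ a ∈ Finset.univ.filter (fun a => N.head a = v), ∫ ξ in (0:ℝ)..(θ - (N.τ a : ℝ)), f a ξ

/-- Cumulative flow having left node `v` by time `θ`. -/
noncomputable def outflowBy (N : Network V A) (f : A → ℝ → ℝ) (v : V) (θ : ℝ) : ℝ :=
  ∑ a ∈ Finset.univ.filter (fun a => N.tail a = v), ∫ ξ in (0:ℝ)..θ, f a ξ

/-- A feasible flow over time with horizon `T`. -/
def IsFlowOverTime (N : Network V A) (T : ℝ) (f : A → ℝ → ℝ) : Prop :=
  (∀ a, Measurable (f a)) ∧ (∀ a θ, 0 ≤ f a θ) ∧ (∀ a θ, f a θ ≤ N.u a) ∧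
    (∀ a θ, T - (N.τ a : ℝ) < θ → f a θ = 0) ∧ (∀ a θ, θ < 0 → f a θ = 0) ∧
    ∀ v, v ≠ N.s → v ≠ N.t → ∀ θ ∈ Set.Ico (0:ℝ) T,
      N.outflowBy f v θ ≤ N.inflowBy f v θ

/-- Value of a flow over time with horizon `T`. -/
noncomputable def fotValue (N : Network V A) (T : ℝ) (f : A → ℝ → ℝ) : ℝ :=
  N.outflowBy f N.s T - N.inflowBy f N.s T

/-- Amount of flow of a flow over time arrived at the sink by time `θ`. -/
noncomputable def arrivedBy (N : Network V A) (f : A → ℝ → ℝ) (θ : ℝ) : ℝ :=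
  N.inflowBy f N.t θ - N.outflowBy f N.t θ

/-- Feasibility of a static `s`-`t` flow. -/
def IsStaticFlow (N : Network V A) (x : A → ℝ) : Prop :=
  (∀ a, 0 ≤ x a) ∧ (∀ a, x a ≤ N.u a) ∧
    ∀ v, v ≠ N.s → v ≠ N.t →
      ∑ a ∈ Finset.univ.filter (fun a => N.head a = v), x a =
      ∑ a ∈ Finset.univ.filter (fun a => N.tail a = v), x a

/-- Value of a static `s`-`t` flow. -/
noncomputable def staticValue (N : Network V A) (x : A → ℝ) : ℝ :=
  ∑ a ∈ Finset.univ.filter (fun a => N.tail a = N.s), x a -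
  ∑ a ∈ Finset.univ.filter (fun a => N.head a = N.s), x a

end

end Network

open Network

/-- Node type for the 3-SAT network: `Sum.inl 0 = s`, `Sum.inl 1 = t`,
`Sum.inr (Sum.inl i) = vᵢ`, and `Sum.inr (Sum.inr (i, b, j))` is the node `wᵢʲ`
(for `b = true`) resp. `w̄ᵢʲ` (for `b = false`), `0 ≤ j ≤ m`. -/
abbrev V₁₇ (n : ℕ) : Type := Fin 2 ⊕ (Fin n ⊕ Fin n × Bool × ℕ)

/-- Arc type for the 3-SAT network: `Sum.inr i` is the arc `(vᵢ, t)`;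
`Sum.inl (i, b, j)` is, for `j = 0`, the arc from `s` into the chain of variable `i`
and sign `b`, for `1 ≤ j ≤ m` the `j`-th chain arc `(wᵢʲ⁻¹, wᵢʲ)`, and for
`j = m + 1` the arc `(wᵢᵐ, vᵢ)`. -/
abbrev A₁₇ (n m : ℕ) : Type := (Fin n × Bool × Fin (m + 2)) ⊕ Fin n

/-- The network of Theorem 3.1, built from a 3-SAT instance with `n` variables and
`m` clauses `C : Fin m → Fin 3 → Fin n × Bool` (a literal is a pair (variable, sign)).
All capacities and transit times are `1`; the arc `(wᵢʲ⁻¹, wᵢʲ)` of the positive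
chain has cost `1` iff `¬Xᵢ ∈ C_j`, the corresponding arc of the negative chain has
cost `1` iff `Xᵢ ∈ C_j`, and all other arcs have cost `0`. -/
def N₁₇ (n m : ℕ) (C : Fin m → Fin 3 → Fin n × Bool) :
    Network (V₁₇ n) (A₁₇ n m) where
  tail := fun e => match e with
    | Sum.inl (i, b, j) =>
        if (j : ℕ) = 0 then Sum.inl 0 else Sum.inr (Sum.inr (i, b, (j : ℕ) - 1))
    | Sum.inr i => Sum.inr (Sum.inl i)
  head := fun e => match e with
    | Sum.inl (i, b, j) =>
        if (j : ℕ) = m + 1 then Sum.inr (Sum.inl i) else Sum.inr (Sum.inr (i, b, (j : ℕ)))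
    | Sum.inr _ => Sum.inl 1
  u := fun _ => 1
  τ := fun _ => 1
  c := fun e => match e with
    | Sum.inl (i, b, j) =>
        if h : 1 ≤ (j : ℕ) ∧ (j : ℕ) ≤ m then
          (if ∃ r : Fin 3, C ⟨(j : ℕ) - 1, by omega⟩ r = (i, !b) then 1 else 0)
        else 0
    | Sum.inr _ => 0
  s := Sum.inl 0
  t := Sum.inl 1


/-!
Every node other than `s` has a single outgoing arc, so an `s`-`t` path is determined by its
first arc: it is the chain path `s → w⁰ → ⋯ → wᵐ → vᵢ → t` of a literal `(i, b)`. All these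
paths have length `m + 3 = T - 1`, so the TR flow sends the rate of a chain path during `[0, 1)`
and uses its `j`-th arc exactly during `[j, j + 1)`. The unit capacity of `(vᵢ, t)` and the value
bound `n` force an integral decomposition to put rate `1` on exactly one chain per variable,
i.e. to be the flow of an assignment `α`. The chain of the literal made true by `α` pays on the
arc of column `j + 1` exactly when the opposite literal, which `α` falsifies, lies in clause `j`.
Hence the cost rate on `[j, j + 1)` is the number of literals of the corresponding clause
falsified by `α`, the peak cost is the largest such number, and it is at most `2` iff every
clause contains a true literal.
-/

theorem List.takeWhile_ne_getElem {α : Type*} [DecidableEq α] {l : List α} (hl : l.Nodup)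
    (k : ℕ) (hk : k < l.length) : l.takeWhile (fun b => b ≠ l[k]) = l.take k := by
  rw [List.takeWhile_eq_take_findIdx_not, (List.findIdx_eq hk).2]
  refine ⟨by simp, fun j hjk => ?_⟩
  simpa using (hl.getElem_inj_iff).not.2 (by omega)

theorem List.IsChain.eq_of_functional {α : Type*} {R : α → α → Prop}
    (hR : ∀ a b c, R a b → R a c → b = c) {P : α → Prop} (hP : ∀ a b, P a → ¬ R a b) :
    ∀ {a : α} {p q : List α}, (a :: p).IsChain R → (a :: q).IsChain R →
      P ((a :: p).getLast (List.cons_ne_nil _ _)) → P ((a :: q).getLast (List.cons_ne_nil _ _)) →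
      p = q
  | _, [], [], _, _, _, _ => rfl
  | _, [], _ :: _, _, hq, hp', _ => absurd (List.isChain_cons_cons.1 hq).1 (hP _ _ hp')
  | _, _ :: _, [], hp, _, _, hq' => absurd (List.isChain_cons_cons.1 hp).1 (hP _ _ hq')
  | _, _ :: _, _ :: _, hp, hq, hp', hq' => by
    obtain rfl := hR _ _ _ (List.isChain_cons_cons.1 hp).1 (List.isChain_cons_cons.1 hq).1
    rw [List.getLast_cons_cons] at hp' hq'
    rw [List.IsChain.eq_of_functional hR hP (List.isChain_cons_cons.1 hp).2
      (List.isChain_cons_cons.1 hq).2 hp' hq']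

theorem finsum_mem_eq_sum_indicator {ι β M : Type*} [Fintype ι] [AddCommMonoid M]
    {F : β → M} {Q : ι → β} (hQ : Function.Injective Q)
    (hF : Function.support F ⊆ Set.range Q) (S : Set β) :
    ∑ᶠ p ∈ S, F p = ∑ i, S.indicator F (Q i) := by
  rw [finsum_mem_def, finsum_eq_sum_of_support_subset (s := Finset.univ.map ⟨Q, hQ⟩),
    Finset.sum_map]
  · rfl
  · intro p hp
    obtain ⟨i, rfl⟩ := hF (Set.support_indicator.subset hp).2
    simp

theorem Finset.sum_ite_le_of_unique {ι : Type*} (s : Finset ι) {p : ι → Prop} [DecidablePred p]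
    {g : ι → ℝ} {B : ℝ} (hB : 0 ≤ B) (hg : ∀ i, p i → g i ≤ B)
    (hp : ∀ i j, p i → p j → i = j) : ∑ i ∈ s, (if p i then g i else 0) ≤ B := by
  rw [← Finset.sum_filter]
  calc ∑ i ∈ s.filter p, g i ≤ (s.filter p).card • B :=
        Finset.sum_le_card_nsmul _ _ _ fun i hi => hg i (Finset.mem_filter.1 hi).2
    _ ≤ 1 • B := nsmul_le_nsmul_left hB (Finset.card_le_one.2 fun i hi j hj =>
        hp i j (Finset.mem_filter.1 hi).2 (Finset.mem_filter.1 hj).2)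
    _ = B := one_nsmul B

theorem integral_ite_Ico_eq_one (x : ℝ) :
    ∫ ξ in x..(x + 1), (if x ≤ ξ ∧ ξ < x + 1 then (1 : ℝ) else 0) = 1 := by
  rw [intervalIntegral.integral_of_le (by linarith), integral_Ioc_eq_integral_Ioo,
    setIntegral_congr_fun measurableSet_Ioo (g := fun _ => 1) fun ξ hξ => if_pos ⟨hξ.1.le, hξ.2⟩]
  simp

open Finset in
theorem card_negatedVars_eq_card_falsified {κ : Type*} [Fintype κ] {n : ℕ}
    (c : κ → Fin n × Bool) (hc : Function.Injective c) (α : Fin n → Bool) :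
    #{i | ∃ r, c r = (i, !α i)} = #{r | α (c r).1 ≠ (c r).2} := by
  have hfalse : ∀ r, α (c r).1 ≠ (c r).2 ↔ c r = ((c r).1, !α (c r).1) := fun r => by
    rw [Prod.ext_iff]
    cases α (c r).1 <;> simp
  symm
  refine card_bij (fun r _ => (c r).1) (fun r hr => ?_) (fun r hr r' hr' h => hc ?_) fun i hi => ?_
  · simp only [mem_filter, mem_univ, true_and] at hr ⊢
    exact ⟨r, (hfalse r).1 hr⟩
  · simp only [mem_filter, mem_univ, true_and, hfalse] at hr hr'
    rw [hr, hr', h]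
  · simp only [mem_filter, mem_univ, true_and] at hi ⊢
    obtain ⟨r, hr⟩ := hi
    exact ⟨r, by simp [hr], by simp [hr]⟩

open Finset in
theorem card_filter_not_le_two_iff {P : Fin 3 → Prop} [DecidablePred P] :
    #{r | ¬ P r} ≤ 2 ↔ ∃ r, P r := by
  rw [show 2 = Fintype.card (Fin 3) - 1 from rfl, Nat.le_sub_one_iff_lt (by simp),
    card_lt_iff_ne_univ]
  simp [eq_univ_iff_forall]

namespace Network

variable {V A : Type}

theorem IsSTPath.nodup {N : Network V A} {p : List A} (hp : N.IsSTPath p) : p.Nodup := by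
  obtain ⟨hne, -, -, -, hnodes⟩ := hp
  obtain ⟨a, rest, rfl⟩ := List.exists_cons_of_ne_nil hne
  exact (List.nodup_cons.1 hnodes).2.of_map N.head

theorem IsSTPath.eq_of_head?_eq {N : Network V A}
    (hdet : ∀ a e e', N.head a = N.tail e → N.head a = N.tail e' → e = e')
    (hsink : ∀ e, N.tail e ≠ N.t) {p q : List A} (hp : N.IsSTPath p) (hq : N.IsSTPath q)
    (h : p.head? = q.head?) : p = q := by
  obtain ⟨hpne, hpch, -, hplast, -⟩ := hp
  obtain ⟨hqne, hqch, -, hqlast, -⟩ := hq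
  obtain ⟨a, p, rfl⟩ := List.exists_cons_of_ne_nil hpne
  obtain ⟨b, q, rfl⟩ := List.exists_cons_of_ne_nil hqne
  obtain rfl : a = b := by simpa using h
  have hterm : ∀ x e, N.head x = N.t → ¬ N.head x = N.tail e := fun x e hx he =>
    hsink e (he ▸ hx)
  rw [List.IsChain.eq_of_functional hdet hterm hpch hqch
    (hplast _ (List.getLast?_eq_some_getLast _)) (hqlast _ (List.getLast?_eq_some_getLast _))]

variable (N : Network V A)

theorem nodup_nodes_of_potential (φ : V → ℕ) (hφ : ∀ a, φ (N.tail a) < φ (N.head a))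
    {p : List A} (hp : p.IsChain (fun a b => N.head a = N.tail b)) : (N.nodes p).Nodup := by
  suffices h : ((N.nodes p).map φ).IsChain (· < ·) from
    h.pairwise.of_map φ fun _ _ hlt => ne_of_apply_ne φ hlt.ne
  cases p with
  | nil => simp [nodes]
  | cons a rest =>
    have hheads : ((a :: rest).map (φ ∘ N.head)).IsChain (· < ·) :=
      List.isChain_map_of_isChain _ (fun a b hab => by simpa [hab] using hφ b) hp
    simpa [nodes, List.isChain_cons_cons, ← List.map_map, hφ a] using hheads

section Temporal

variable [DecidableEq A]

theorem prefixTime_add_suffixTime (p : List A) (a : A) :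
    N.prefixTime p a + N.suffixTime p a = N.pathTime p := by
  rw [prefixTime, suffixTime, pathTime, ← List.sum_append, ← List.map_append,
    List.takeWhile_append_dropWhile]

theorem trRate_nonneg {y : List A → ℝ} (hy : ∀ p, 0 ≤ y p) (T : ℝ) (a : A) (θ : ℝ) :
    0 ≤ N.trRate y T a θ :=
  finsum_nonneg fun p => finsum_nonneg fun _ => hy p

theorem intervalIntegrable_trRate {y : List A → ℝ} (hy : (Function.support y).Finite)
    (T : ℝ) (a : A) (u v : ℝ) : IntervalIntegrable (N.trRate y T a) volume u v := by
  set P : List A → ℝ → Prop := fun p θ => N.IsSTPath p ∧ (N.pathTime p : ℝ) ≤ T ∧ a ∈ p ∧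
    (N.prefixTime p a : ℝ) ≤ θ ∧ (N.suffixTime p a : ℝ) < T - θ
  have hrate : N.trRate y T a = ∑ p ∈ hy.toFinset, {θ | P p θ}.indicator (fun _ => y p) := by
    funext θ
    rw [Finset.sum_apply, trRate, finsum_mem_def,
      finsum_eq_sum_of_support_subset _ (s := hy.toFinset) fun p hp => by
        simpa using (Set.support_indicator.subset hp).2]
    rfl
  have hmeas : ∀ p, MeasurableSet {θ | P p θ} := fun p => by
    simp only [P]
    measurability
  rw [hrate]
  exact IntervalIntegrable.sum _ fun p _ =>
    ⟨(integrableOn_const (by simp)).indicator (hmeas p),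
      (integrableOn_const (by simp)).indicator (hmeas p)⟩

end Temporal

section Cost

variable [Fintype A]

theorem costAt_le_of_costRate_le (hτ : ∀ a, N.τ a = 1) {f : A → ℝ → ℝ} {θ B : ℝ}
    (hf : ∀ a, IntervalIntegrable (f a) volume (θ - 1) θ)
    (hB : ∀ ξ, ∑ a, (N.c a : ℝ) * f a ξ ≤ B) : N.costAt f θ ≤ B := by
  have hsum : IntervalIntegrable (fun ξ => ∑ a, (N.c a : ℝ) * f a ξ) volume (θ - 1) θ := by
    have := IntervalIntegrable.sum Finset.univ fun a _ => (hf a).const_mul (N.c a : ℝ)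
    rwa [Finset.sum_fn] at this
  calc N.costAt f θ = ∫ ξ in (θ - 1)..θ, ∑ a, (N.c a : ℝ) * f a ξ := by
        rw [costAt, intervalIntegral.integral_finsetSum fun a _ => (hf a).const_mul _]
        simp [hτ, intervalIntegral.integral_const_mul]
    _ ≤ ∫ _ in (θ - 1)..θ, B :=
        intervalIntegral.integral_mono_on (by linarith) hsum intervalIntegrable_const
          fun ξ _ => hB ξ
    _ = B := by simp

theorem peakCost_le {f : A → ℝ → ℝ} {T B : ℝ} (hB : 0 ≤ B)
    (h : ∀ θ ∈ Set.Ico 0 T, N.costAt f θ ≤ B) : N.peakCost f T ≤ B :=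
  Real.sSup_le (by rintro _ ⟨θ, hθ, rfl⟩; exact h θ hθ) hB

end Cost

end Network

namespace N₁₇

variable {n m : ℕ} {C : Fin m → Fin 3 → Fin n × Bool}

@[simp] theorem u_apply (a : A₁₇ n m) : (N₁₇ n m C).u a = 1 := rfl

@[simp] theorem tau_apply (a : A₁₇ n m) : (N₁₇ n m C).τ a = 1 := rfl

@[simp] theorem c_inr (i : Fin n) : (N₁₇ n m C).c (Sum.inr i) = 0 := rfl

theorem pathTime_eq_length (p : List (A₁₇ n m)) : (N₁₇ n m C).pathTime p = p.length := by
  simp [pathTime, N₁₇]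

section Paths

def potential (m : ℕ) : V₁₇ n → ℕ
  | Sum.inl k => if k = 0 then 0 else m + 3
  | Sum.inr (Sum.inl _) => m + 2
  | Sum.inr (Sum.inr (_, _, j)) => j + 1

theorem potential_tail_lt_head (a : A₁₇ n m) :
    potential m ((N₁₇ n m C).tail a) < potential m ((N₁₇ n m C).head a) := by
  rcases a with ⟨i, b, j⟩ | i <;> simp only [N₁₇] <;> grind [potential]

theorem tail_ne_sink (e : A₁₇ n m) : (N₁₇ n m C).tail e ≠ (N₁₇ n m C).t := by
  rcases e with ⟨i, b, j⟩ | i <;> simp only [N₁₇] <;> grind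

theorem eq_of_head_eq_tail {a e e' : A₁₇ n m} (he : (N₁₇ n m C).head a = (N₁₇ n m C).tail e)
    (he' : (N₁₇ n m C).head a = (N₁₇ n m C).tail e') : e = e' := by
  rcases a with ⟨i, b, j⟩ | i <;> rcases e with ⟨i₁, b₁, j₁⟩ | i₁ <;>
    rcases e' with ⟨i₂, b₂, j₂⟩ | i₂ <;> simp only [N₁₇] at he he' <;> grind

def chainArc (l : Fin n × Bool) (k : Fin (m + 3)) : A₁₇ n m :=
  if h : (k : ℕ) < m + 2 then Sum.inl (l.1, l.2, ⟨k, h⟩) else Sum.inr l.1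

def chainPath (m : ℕ) (l : Fin n × Bool) : List (A₁₇ n m) := List.ofFn (chainArc l)

theorem chainArc_castSucc (l : Fin n × Bool) (j : Fin (m + 2)) :
    chainArc l j.castSucc = Sum.inl (l.1, l.2, j) := by
  simp [chainArc]

@[simp] theorem length_chainPath (l : Fin n × Bool) : (chainPath m l).length = m + 3 :=
  List.length_ofFn

theorem chainPath_injective : Function.Injective (chainPath (n := n) m) := fun l l' h => by
  simpa [chainPath, List.ofFn_succ, chainArc, Prod.ext_iff] using congrArg List.head? h

theorem mem_chainPath_inl {l : Fin n × Bool} {i : Fin n} {b : Bool} {j : Fin (m + 2)} :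
    Sum.inl (i, b, j) ∈ chainPath m l ↔ l = (i, b) := by
  simp only [chainPath, List.mem_ofFn, chainArc]
  constructor
  · rintro ⟨k, hk⟩
    split_ifs at hk
    simp_all [Prod.ext_iff]
  · rintro rfl
    exact ⟨j.castSucc, by simp⟩

theorem mem_chainPath_inr {l : Fin n × Bool} {i : Fin n} :
    Sum.inr i ∈ chainPath m l ↔ l.1 = i := by
  simp only [chainPath, List.mem_ofFn, chainArc]
  constructor
  · rintro ⟨k, hk⟩
    split_ifs at hk
    simpa using hk
  · rintro rfl
    exact ⟨Fin.last _, by simp⟩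

theorem isChain_chainPath (l : Fin n × Bool) :
    (chainPath m l).IsChain (fun a b => (N₁₇ n m C).head a = (N₁₇ n m C).tail b) := by
  rw [chainPath, List.isChain_ofFn]
  intro k hk
  simp only [chainArc, N₁₇]
  grind

theorem isSTPath_chainPath (l : Fin n × Bool) : (N₁₇ n m C).IsSTPath (chainPath m l) := by
  refine ⟨by simp [chainPath], isChain_chainPath l, ?_, ?_,
    (N₁₇ n m C).nodup_nodes_of_potential (potential m) potential_tail_lt_head
      (isChain_chainPath l)⟩
  · simp [chainPath, List.ofFn_succ, chainArc, N₁₇]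
  · rw [chainPath, List.ofFn_succ_last, List.getLast?_concat]
    simp [chainArc, N₁₇]

theorem exists_chainArc_zero_of_tail_eq_source {e : A₁₇ n m}
    (he : (N₁₇ n m C).tail e = (N₁₇ n m C).s) : ∃ l, e = chainArc l 0 := by
  rcases e with ⟨i, b, j⟩ | i
  · refine ⟨(i, b), ?_⟩
    simp only [N₁₇] at he
    simp only [chainArc]
    grind
  · simp [N₁₇] at he

theorem exists_eq_chainPath_of_isSTPath {p : List (A₁₇ n m)} (hp : (N₁₇ n m C).IsSTPath p) :
    ∃ l, p = chainPath m l := by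
  obtain ⟨a, rest, rfl⟩ := List.exists_cons_of_ne_nil hp.1
  obtain ⟨l, rfl⟩ := exists_chainArc_zero_of_tail_eq_source (hp.2.2.1 _ rfl)
  exact ⟨l, hp.eq_of_head?_eq (fun _ _ _ => eq_of_head_eq_tail) tail_ne_sink
    (isSTPath_chainPath l) (by simp [chainPath, List.ofFn_succ])⟩

theorem prefixTime_chainArc (l : Fin n × Bool) (k : Fin (m + 3)) :
    (N₁₇ n m C).prefixTime (chainPath m l) (chainArc l k) = k := by
  have hk : chainArc l k = (chainPath m l)[(k : ℕ)]'(by simp) := by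
    simp only [chainPath, List.getElem_ofFn, Fin.eta]
  rw [hk, prefixTime, List.takeWhile_ne_getElem (isSTPath_chainPath (C := C) l).nodup]
  exact (pathTime_eq_length _).trans (by simp)

end Paths

section ChainFlows

variable {y : List (A₁₇ n m) → ℝ}

theorem staticOf_inr (hy : Function.support y ⊆ Set.range (chainPath m)) (i : Fin n) :
    (N₁₇ n m C).staticOf y (Sum.inr i) = ∑ b, y (chainPath m (i, b)) := by
  rw [staticOf, finsum_mem_eq_sum_indicator chainPath_injective hy, Fintype.sum_prod_type,
    Finset.sum_eq_single i]
  · simp [mem_chainPath_inr]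
  · intro i' _ hi'
    simp [mem_chainPath_inr, hi']
  · simp

theorem staticOf_inl (hy : Function.support y ⊆ Set.range (chainPath m))
    (i : Fin n) (b : Bool) (j : Fin (m + 2)) :
    (N₁₇ n m C).staticOf y (Sum.inl (i, b, j)) = y (chainPath m (i, b)) := by
  rw [staticOf, finsum_mem_eq_sum_indicator chainPath_injective hy, Finset.sum_eq_single (i, b)]
  · simp [mem_chainPath_inl]
  · intro l _ hl
    simp [mem_chainPath_inl, hl]
  · simp

theorem trValue_eq_sum (hy : Function.support y ⊆ Set.range (chainPath m)) :
    (N₁₇ n m C).trValue y ((m + 4 : ℕ) : ℝ) = ∑ l, y (chainPath m l) := by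
  rw [trValue, finsum_mem_eq_sum_indicator chainPath_injective
    (fun p hp => hy fun h => hp (by simp [h]))]
  refine Finset.sum_congr rfl fun l _ => ?_
  rw [Set.indicator_of_mem (by exact ⟨isSTPath_chainPath l, by norm_num [pathTime_eq_length]⟩)]
  norm_num [pathTime_eq_length]

theorem trRate_inl (hy : Function.support y ⊆ Set.range (chainPath m))
    (i : Fin n) (b : Bool) (j : Fin (m + 2)) (θ : ℝ) :
    (N₁₇ n m C).trRate y ((m + 4 : ℕ) : ℝ) (Sum.inl (i, b, j)) θ =
      if (j : ℝ) ≤ θ ∧ θ < j + 1 then y (chainPath m (i, b)) else 0 := by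
  have hpre : (N₁₇ n m C).prefixTime (chainPath m (i, b)) (Sum.inl (i, b, j)) = j := by
    simpa [chainArc_castSucc] using prefixTime_chainArc (C := C) (i, b) j.castSucc
  have hsuf : ((N₁₇ n m C).suffixTime (chainPath m (i, b)) (Sum.inl (i, b, j)) : ℝ) =
      m + 3 - j := by
    have := (N₁₇ n m C).prefixTime_add_suffixTime (chainPath m (i, b)) (Sum.inl (i, b, j))
    rw [hpre, pathTime_eq_length, length_chainPath] at this
    rw [eq_sub_iff_add_eq', ← Nat.cast_add, this]
    push_cast
    ring
  rw [trRate, finsum_mem_eq_sum_indicator chainPath_injective hy, Finset.sum_eq_single (i, b)]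
  · by_cases hw : (j : ℝ) ≤ θ ∧ θ < j + 1
    · rw [if_pos hw, Set.indicator_of_mem]
      refine ⟨isSTPath_chainPath _, by norm_num [pathTime_eq_length],
        mem_chainPath_inl.2 rfl, hpre ▸ hw.1, ?_⟩
      rw [hsuf]
      push_cast
      linarith
    · rw [if_neg hw, Set.indicator_of_notMem]
      rintro ⟨-, -, -, h₁, h₂⟩
      rw [hpre] at h₁
      rw [hsuf] at h₂
      push_cast at h₂
      exact hw ⟨h₁, by linarith⟩
  · intro l _ hl
    simp [mem_chainPath_inl, hl]
  · simp

end ChainFlows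

section AssignmentFlow

noncomputable def assignmentFlow (m : ℕ) (α : Fin n → Bool) : List (A₁₇ n m) → ℝ :=
  (Set.range fun i => chainPath m (i, α i)).indicator 1

variable {α : Fin n → Bool}

theorem assignmentFlow_chainPath (l : Fin n × Bool) :
    assignmentFlow m α (chainPath m l) = if α l.1 = l.2 then 1 else 0 := by
  simp [assignmentFlow, Set.indicator_apply, chainPath_injective.eq_iff, Prod.ext_iff]

theorem support_assignmentFlow_subset :
    Function.support (assignmentFlow m α) ⊆ Set.range (chainPath m) :=
  Set.support_indicator_subset.trans fun _ ⟨i, hi⟩ => ⟨(i, α i), hi⟩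

theorem isDecomposition_assignmentFlow : (N₁₇ n m C).IsDecomposition (assignmentFlow m α) := by
  have hy := support_assignmentFlow_subset (m := m) (α := α)
  refine ⟨fun p => Set.indicator_nonneg (fun _ _ => zero_le_one) p, fun p hp => ?_,
    (Set.finite_range _).subset hy, ?_⟩
  · obtain ⟨l, rfl⟩ := hy hp
    exact isSTPath_chainPath l
  · rintro (⟨i, b, j⟩ | i)
    · rw [staticOf_inl hy, assignmentFlow_chainPath]
      split_ifs <;> simp
    · rw [staticOf_inr hy, Fintype.sum_bool, assignmentFlow_chainPath, assignmentFlow_chainPath]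
      cases α i <;> simp

theorem isIntegral_assignmentFlow : IsIntegral (assignmentFlow m α) := fun p => by
  by_cases hp : p ∈ Set.range fun i => chainPath m (i, α i)
  · exact ⟨1, by simp [assignmentFlow, hp]⟩
  · exact ⟨0, by simp [assignmentFlow, hp]⟩

theorem trValue_assignmentFlow :
    (N₁₇ n m C).trValue (assignmentFlow m α) ((m + 4 : ℕ) : ℝ) = n := by
  rw [trValue_eq_sum support_assignmentFlow_subset, Fintype.sum_prod_type]
  simp [assignmentFlow_chainPath]

theorem exists_eq_assignmentFlow {y : List (A₁₇ n m) → ℝ}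
    (hdec : (N₁₇ n m C).IsDecomposition y) (hint : IsIntegral y)
    (hval : (n : ℝ) ≤ (N₁₇ n m C).trValue y ((m + 4 : ℕ) : ℝ)) :
    ∃ α, y = assignmentFlow m α := by
  obtain ⟨-, hpath, -, hcap⟩ := hdec
  have hy : Function.support y ⊆ Set.range (chainPath m) := fun p hp =>
    (exists_eq_chainPath_of_isSTPath (hpath p hp)).imp fun _ h => h.symm
  have hle : ∀ i, ∑ b, y (chainPath m (i, b)) ≤ 1 := fun i => by
    simpa [staticOf_inr hy] using hcap (Sum.inr i)
  have heq : ∀ i, ∑ b, y (chainPath m (i, b)) = 1 := by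
    refine fun i => (Finset.sum_eq_sum_iff_of_le fun i _ => hle i).1 (le_antisymm ?_ ?_) i
      (Finset.mem_univ i)
    · exact Finset.sum_le_sum fun i _ => hle i
    · rw [trValue_eq_sum hy, Fintype.sum_prod_type] at hval
      simpa using hval
  refine ⟨fun i => decide (y (chainPath m (i, true)) = 1), funext fun p => ?_⟩
  by_cases hp : p ∈ Set.range (chainPath m)
  · obtain ⟨⟨i, b⟩, rfl⟩ := hp
    obtain ⟨k, hk⟩ := hint (chainPath m (i, true))
    obtain ⟨k', hk'⟩ := hint (chainPath m (i, false))
    have hkk : k + k' = 1 := by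
      have h := heq i
      rw [Fintype.sum_bool, hk, hk'] at h
      exact_mod_cast h
    rw [assignmentFlow_chainPath]
    rcases Nat.add_eq_one_iff.1 hkk with ⟨rfl, rfl⟩ | ⟨rfl, rfl⟩ <;> cases b <;> simp [hk, hk']
  · rw [Function.support_subset_iff'.1 hy p hp,
      Function.support_subset_iff'.1 support_assignmentFlow_subset p hp]

end AssignmentFlow

section Cost

variable {α : Fin n → Bool}

variable (C) in
def columnCost (α : Fin n → Bool) (j : Fin (m + 2)) : ℝ :=
  ∑ i, ((N₁₇ n m C).c (Sum.inl (i, α i, j)) : ℝ)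

theorem trRate_assignmentFlow_inl (i : Fin n) (b : Bool) (j : Fin (m + 2)) (ξ : ℝ) :
    (N₁₇ n m C).trRate (assignmentFlow m α) ((m + 4 : ℕ) : ℝ) (Sum.inl (i, b, j)) ξ =
      if (j : ℝ) ≤ ξ ∧ ξ < j + 1 then (if α i = b then 1 else 0) else 0 := by
  rw [trRate_inl support_assignmentFlow_subset, assignmentFlow_chainPath]

theorem costRate_assignmentFlow (ξ : ℝ) :
    ∑ a, ((N₁₇ n m C).c a : ℝ) *
        (N₁₇ n m C).trRate (assignmentFlow m α) ((m + 4 : ℕ) : ℝ) a ξ =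
      ∑ j : Fin (m + 2), if (j : ℝ) ≤ ξ ∧ ξ < j + 1 then columnCost C α j else 0 := by
  simp only [Fintype.sum_sum_type, c_inr, Nat.cast_zero, zero_mul, Finset.sum_const_zero,
    add_zero, Fintype.sum_prod_type, trRate_assignmentFlow_inl, columnCost]
  refine (Finset.sum_congr rfl fun i _ => Finset.sum_comm).trans ?_
  rw [Finset.sum_comm]
  refine Finset.sum_congr rfl fun j _ => ?_
  split_ifs <;> simp

theorem costAt_assignmentFlow_le {B : ℝ} (hB : 0 ≤ B) (h : ∀ j, columnCost C α j ≤ B)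
    (θ : ℝ) :
    (N₁₇ n m C).costAt ((N₁₇ n m C).trRate (assignmentFlow m α) ((m + 4 : ℕ) : ℝ)) θ ≤ B := by
  refine (N₁₇ n m C).costAt_le_of_costRate_le (fun _ => rfl)
    (fun a => (N₁₇ n m C).intervalIntegrable_trRate
      (isDecomposition_assignmentFlow (C := C)).2.2.1 _ a _ _) fun ξ => ?_
  rw [costRate_assignmentFlow]
  refine Finset.sum_ite_le_of_unique _ hB (fun j _ => h j) fun j k hj hk => Fin.ext ?_
  have h₁ : ((j : ℕ) : ℝ) < k + 1 := hj.1.trans_lt hk.2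
  have h₂ : ((k : ℕ) : ℝ) < j + 1 := hk.1.trans_lt hj.2
  norm_cast at h₁ h₂
  omega

theorem trPeakCost_assignmentFlow_le {B : ℝ} (hB : 0 ≤ B) (h : ∀ j, columnCost C α j ≤ B) :
    (N₁₇ n m C).trPeakCost (assignmentFlow m α) ((m + 4 : ℕ) : ℝ) ≤ B :=
  (N₁₇ n m C).peakCost_le hB fun θ _ => costAt_assignmentFlow_le hB h θ

theorem columnCost_le_costAt_assignmentFlow (j : Fin (m + 2)) :
    columnCost C α j ≤
      (N₁₇ n m C).costAt ((N₁₇ n m C).trRate (assignmentFlow m α) ((m + 4 : ℕ) : ℝ)) (j + 1) := by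
  set f := (N₁₇ n m C).trRate (assignmentFlow m α) ((m + 4 : ℕ) : ℝ)
  have hwindow : ∀ i, ∫ ξ in (j : ℝ)..(j + 1), f (Sum.inl (i, α i, j)) ξ = 1 := fun i => by
    simpa only [f, trRate_assignmentFlow_inl, if_true] using integral_ite_Ico_eq_one (j : ℝ)
  have hinj : Function.Injective fun i : Fin n => (Sum.inl (i, α i, j) : A₁₇ n m) :=
    fun _ _ h => (Prod.mk.inj (Sum.inl_injective h)).1
  calc columnCost C α j
      = ∑ a ∈ Finset.univ.map ⟨_, hinj⟩,
          ((N₁₇ n m C).c a : ℝ) * ∫ ξ in ((j : ℝ) + 1 - (N₁₇ n m C).τ a)..(j + 1), f a ξ := by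
        simp [columnCost, hwindow]
    _ ≤ (N₁₇ n m C).costAt f (j + 1) :=
        Finset.sum_le_univ_sum_of_nonneg fun a => mul_nonneg (Nat.cast_nonneg _)
          (intervalIntegral.integral_nonneg (by simp) fun ξ _ =>
            (N₁₇ n m C).trRate_nonneg (isDecomposition_assignmentFlow (C := C)).1 _ a ξ)

theorem columnCost_le_trPeakCost_assignmentFlow (j : Fin (m + 2)) :
    columnCost C α j ≤ (N₁₇ n m C).trPeakCost (assignmentFlow m α) ((m + 4 : ℕ) : ℝ) := by
  have hcol : ∀ j, 0 ≤ columnCost C α j := fun j =>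
    Finset.sum_nonneg fun _ _ => Nat.cast_nonneg _
  have hbdd : BddAbove ((N₁₇ n m C).costAt
      ((N₁₇ n m C).trRate (assignmentFlow m α) ((m + 4 : ℕ) : ℝ)) ''
        Set.Ico 0 ((m + 4 : ℕ) : ℝ)) :=
    ⟨∑ j, columnCost C α j, by
      rintro _ ⟨θ, -, rfl⟩
      exact costAt_assignmentFlow_le (Finset.sum_nonneg fun j _ => hcol j)
        (fun j => Finset.single_le_sum (fun j _ => hcol j) (Finset.mem_univ j)) θ⟩
  have hj : ((j : ℕ) : ℝ) < m + 2 := by exact_mod_cast j.isLt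
  exact (columnCost_le_costAt_assignmentFlow j).trans
    (le_csSup hbdd ⟨_, ⟨by positivity, by push_cast; linarith⟩, rfl⟩)

end Cost

section Clauses

variable {α : Fin n → Bool}

def clauseColumn (jc : Fin m) : Fin (m + 2) := ⟨jc + 1, by omega⟩

theorem columnCost_eq_zero_of_not_clause {j : Fin (m + 2)} (hj : ¬ (1 ≤ (j : ℕ) ∧ (j : ℕ) ≤ m)) :
    columnCost C α j = 0 := by
  simp [columnCost, N₁₇, hj]

open Finset in
theorem columnCost_clauseColumn (jc : Fin m) (hC : Function.Injective (C jc)) :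
    columnCost C α (clauseColumn jc) = #{r | α (C jc r).1 ≠ (C jc r).2} := by
  have hc : ∀ i, (N₁₇ n m C).c (Sum.inl (i, α i, clauseColumn jc)) =
      if ∃ r, C jc r = (i, !α i) then 1 else 0 := fun i => by
    simp [N₁₇, clauseColumn]
  simp only [columnCost, hc, Nat.cast_ite, Nat.cast_one, Nat.cast_zero, sum_boole]
  norm_cast
  convert card_negatedVars_eq_card_falsified (C jc) hC α

theorem columnCost_clauseColumn_le_two_iff (jc : Fin m) (hC : Function.Injective (C jc)) :
    columnCost C α (clauseColumn jc) ≤ 2 ↔ ∃ r, α (C jc r).1 = (C jc r).2 := by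
  rw [columnCost_clauseColumn jc hC, ← card_filter_not_le_two_iff]
  norm_cast

theorem columnCost_le_two (hC : ∀ j, Function.Injective (C j))
    (hα : ∀ j, ∃ r, α (C j r).1 = (C j r).2) (j : Fin (m + 2)) : columnCost C α j ≤ 2 := by
  by_cases hj : 1 ≤ (j : ℕ) ∧ (j : ℕ) ≤ m
  · obtain ⟨jc, rfl⟩ : ∃ jc : Fin m, j = clauseColumn jc :=
      ⟨⟨j - 1, by omega⟩, Fin.ext (by simp only [clauseColumn]; omega)⟩
    exact (columnCost_clauseColumn_le_two_iff jc (hC jc)).2 (hα jc)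
  · rw [columnCost_eq_zero_of_not_clause hj]
    norm_num

end Clauses

end N₁₇

/-- Theorem 3.1: for a 3-SAT instance with `n` variables and `m`
clauses of three pairwise different literals each, the network `N₁₇ n m C` with time
horizon `T = m + 4` admits an integral temporally repeated flow of value at least `n`
with peak cost at most `2` if and only if the instance is satisfiable.  (Hence
deciding integral MPC-TRF is NP-hard, even on two-terminal series-parallel graphs
with unit transit times, unit capacities and arc costs in `{0,1}`.) -/
theorem stmt17 (n m : ℕ) (C : Fin m → Fin 3 → Fin n × Bool)
    (hC : ∀ j, Function.Injective (C j)) :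
    (∃ y : List (A₁₇ n m) → ℝ,
      (N₁₇ n m C).IsDecomposition y ∧ IsIntegral y ∧
      (n : ℝ) ≤ (N₁₇ n m C).trValue y ((m + 4 : ℕ) : ℝ) ∧
      (N₁₇ n m C).trPeakCost y ((m + 4 : ℕ) : ℝ) ≤ 2) ↔
    (∃ α : Fin n → Bool, ∀ j : Fin m, ∃ r : Fin 3, α (C j r).1 = (C j r).2) := by
  constructor
  · rintro ⟨y, hdec, hint, hval, hpeak⟩
    obtain ⟨α, rfl⟩ := N₁₇.exists_eq_assignmentFlow hdec hint hval
    exact ⟨α, fun jc => (N₁₇.columnCost_clauseColumn_le_two_iff jc (hC jc)).1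
      ((N₁₇.columnCost_le_trPeakCost_assignmentFlow _).trans hpeak)⟩
  · rintro ⟨α, hα⟩
    exact ⟨N₁₇.assignmentFlow m α, N₁₇.isDecomposition_assignmentFlow,
      N₁₇.isIntegral_assignmentFlow, N₁₇.trValue_assignmentFlow.ge,
      N₁₇.trPeakCost_assignmentFlow_le zero_le_two (N₁₇.columnCost_le_two hC hα)⟩
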